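/- Let G be an n-vertex graph such that α₁(G) + τ_B(G) > n²/4 while every proper induced subgraph H of G satisfies α₁(H) + τ_B(H) ≤ |V(H)|²/4. If S is a maximal clique in G, then there is a vertex v ∉ S such that the induced subgraph G[S ∪ {v}] is isomorphic to K_{|S|+1}⁻, the complete graph on |S|+1 vertices with one edge deleted; in particular, v is adjacent to exactly |S| − 1 vertices of S. -/

import Mathlib

open Finset

/-- `A` is a triangle-independent set of edges of `G`: it consists of edges of `G`
and contains at most one edge from each triangle of `G`. -/
def TriIndep {V : Type*} (G : SimpleGraph V) (A : Finset (Sym2 V)) : Prop :=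
  (A : Set (Sym2 V)) ⊆ G.edgeSet ∧
    ∀ x y z : V, G.Adj x y → G.Adj y z → G.Adj x z →
      ¬(s(x, y) ∈ A ∧ s(y, z) ∈ A)

/-- `α₁ G`: the maximum size of a triangle-independent set of edges of `G`. -/
noncomputable def alpha1 {V : Type*} [Fintype V] (G : SimpleGraph V) : ℕ :=
  sSup {k | ∃ A : Finset (Sym2 V), TriIndep G A ∧ A.card = k}

/-- `τ G`: the minimum size of a set of edges whose deletion makes `G` triangle-free. -/
noncomputable def tau {V : Type*} [Fintype V] (G : SimpleGraph V) : ℕ :=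
  sInf {k | ∃ X : Finset (Sym2 V), (X : Set (Sym2 V)) ⊆ G.edgeSet ∧
    (G.deleteEdges (X : Set (Sym2 V))).CliqueFree 3 ∧ X.card = k}

/-- `τ_B G`: the minimum size of a set of edges whose deletion makes `G` bipartite. -/
noncomputable def tauB {V : Type*} [Fintype V] (G : SimpleGraph V) : ℕ :=
  sInf {k | ∃ X : Finset (Sym2 V), (X : Set (Sym2 V)) ⊆ G.edgeSet ∧
    (G.deleteEdges (X : Set (Sym2 V))).Colorable 2 ∧ X.card = k}

open scoped Classical in
/-- The edge cut `[S, S̄]`: the set of edges of `G` with one endpoint in `S`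
and the other outside `S`. -/
noncomputable def edgeCut {V : Type*} [Fintype V] (G : SimpleGraph V) (S : Finset V) :
    Finset (Sym2 V) :=
  G.edgeFinset.filter (fun e => ∃ x ∈ S, ∃ y ∉ S, e = s(x, y))

open scoped Classical in
/-- The number of edges of `G`. -/
noncomputable def edgeCount {V : Type*} [Fintype V] (G : SimpleGraph V) : ℕ :=
  G.edgeFinset.card

/-- The independence number of `G`. -/
noncomputable def indepNum {V : Type*} [Fintype V] (G : SimpleGraph V) : ℕ :=
  sSup {k | ∃ I : Finset V, (∀ x ∈ I, ∀ y ∈ I, ¬G.Adj x y) ∧ I.card = k}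

/-- `K₄⁻`: the complete graph on 4 vertices with one edge deleted. -/
def K4minus : SimpleGraph (Fin 4) := (SimpleGraph.completeGraph (Fin 4)).deleteEdges {s(0, 1)}


/-!
Suppose no vertex outside the maximal clique `S` has `|S| - 1` neighbours in `S`, so every
`y ∈ T := V \ S` has at most `s - 2` of them, where `s = |S|`, `t = |T|`. A triangle-independent
set meets the clique `S` in a matching and has at most one edge from each `y ∈ T` into `S`, so
`α₁(G) ≤ α₁(G[T]) + ⌊s/2⌋ + t`. Extending an optimal 2-colouring of `G[T]` by a balanced split
of `S`, chosen so that at most half of the `S`–`T` edges become monochromatic, gives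
`τ_B(G) ≤ τ_B(G[T]) + s²/4 - ⌊s/2⌋ + e(S,T)/2`, and `e(S,T) ≤ t(s - 2)`. Adding up and using
minimality for `G[T]` gives `α₁(G) + τ_B(G) ≤ (s + t)²/4`, a contradiction.
-/

namespace Finset

variable {α : Type*} [DecidableEq α]

theorem exists_balanced_split (a b : α → ℕ) (S : Finset α) :
    ∃ S₁ S₂ : Finset α, Disjoint S₁ S₂ ∧ S₁ ∪ S₂ = S ∧ #S₁ ≤ #S₂ + 1 ∧ #S₂ ≤ #S₁ + 1 ∧
      2 * (∑ u ∈ S₁, a u + ∑ u ∈ S₂, b u) ≤ ∑ u ∈ S, (a u + b u) := by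
  induction S using Finset.strongInduction with | H S ih => ?_
  rw [sum_add_distrib]
  rcases Nat.lt_or_ge #S 2 with hS | hS
  · rcases le_total (∑ u ∈ S, a u) (∑ u ∈ S, b u) with hab | hab
    · exact ⟨S, ∅, disjoint_empty_right S, union_empty S, by simp; omega, by simp,
        by simp only [sum_empty]; omega⟩
    · exact ⟨∅, S, disjoint_empty_left S, empty_union S, by simp, by simp; omega,
        by simp only [sum_empty]; omega⟩
  -- Split off two elements `u ≠ v` and send them to opposite sides, the cheaper way round.
  obtain ⟨u, hu, v, hv, huv⟩ := one_lt_card.mp hS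
  wlog hc : a u + b v ≤ a v + b u generalizing u v
  · exact this v hv u hu (Ne.symm huv) (by omega)
  set S' := (S.erase u).erase v
  have huS' : u ∉ S' := fun h => notMem_erase u S (mem_of_mem_erase h)
  have hvS' : v ∉ S' := notMem_erase v _
  have hvS : v ∈ S.erase u := mem_erase.mpr ⟨huv.symm, hv⟩
  have hS' : S = insert u (insert v S') := by rw [insert_erase hvS, insert_erase hu]
  obtain ⟨S₁, S₂, hdisj, hunion, h₁, h₂, hcost⟩ :=
    ih S' ((erase_ssubset hvS).trans (erase_ssubset hu))
  rw [sum_add_distrib] at hcost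
  have hu₁ : u ∉ S₁ := fun h => huS' (hunion ▸ mem_union_left _ h)
  have hu₂ : u ∉ S₂ := fun h => huS' (hunion ▸ mem_union_right _ h)
  have hv₁ : v ∉ S₁ := fun h => hvS' (hunion ▸ mem_union_left _ h)
  have hv₂ : v ∉ S₂ := fun h => hvS' (hunion ▸ mem_union_right _ h)
  refine ⟨insert u S₁, insert v S₂, ?_, ?_, ?_, ?_, ?_⟩
  · simp [disjoint_insert_left, disjoint_insert_right, huv.symm, hu₂, hv₁, hdisj]
  · rw [insert_union, union_insert, hunion, hS']
  · rw [card_insert_of_notMem hu₁, card_insert_of_notMem hv₂]; omega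
  · rw [card_insert_of_notMem hu₁, card_insert_of_notMem hv₂]; omega
  · have huvS' : u ∉ insert v S' := by simp [huv, huS']
    rw [sum_insert hu₁, sum_insert hv₂, hS', sum_insert huvS', sum_insert hvS',
      sum_insert huvS', sum_insert hvS']
    omega

theorem card_le_card_inter_add_card_inter_add_card_sdiff (A B C : Finset α) :
    #A ≤ #(A ∩ B) + #(A ∩ C) + #(A \ (B ∪ C)) :=
  calc #A ≤ #(A ∩ B ∪ A ∩ C ∪ A \ (B ∪ C)) := card_le_card fun x hx => by
        by_cases hB : x ∈ B <;> by_cases hC : x ∈ C <;> simp [hx, hB, hC]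
    _ ≤ _ := (card_union_le _ _).trans (Nat.add_le_add_right (card_union_le _ _) _)

theorem card_le_choose_two_of_subset_sym2 {P : Finset α} {W : Finset (Sym2 α)} (hW : W ⊆ P.sym2)
    (hdiag : ∀ e ∈ W, ¬e.IsDiag) : #W ≤ (#P).choose 2 := by
  rw [← Sym2.card_image_offDiag]
  refine card_le_card fun e he => ?_
  induction e using Sym2.ind with
  | _ x y =>
    have hP := mem_sym2_iff.mp (hW he)
    exact mem_image.mpr ⟨(x, y), mem_offDiag.mpr ⟨hP x (Sym2.mem_mk_left x y),
      hP y (Sym2.mem_mk_right x y), hdiag _ he⟩, rfl⟩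

theorem card_inter_sym2_le_card_preimage (W : Finset (Sym2 α)) (T : Finset α) :
    #(W ∩ T.sym2) ≤ #({e : Sym2 (T : Set α) | e.map Subtype.val ∈ W} : Finset _) := by
  refine card_le_card_of_surjOn (Sym2.map Subtype.val) fun e he => ?_
  induction e using Sym2.ind with
  | _ x y =>
    obtain ⟨he, hT⟩ := mem_inter.mp he
    have hT := mem_sym2_iff.mp hT
    exact ⟨s(⟨x, hT x (Sym2.mem_mk_left x y)⟩, ⟨y, hT y (Sym2.mem_mk_right x y)⟩),
      by simpa using he, rfl⟩

end Finset

theorem Nat.four_mul_div_two_add_four_mul_choose_two_le {k₁ k₂ : ℕ} (h₁ : k₁ ≤ k₂ + 1)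
    (h₂ : k₂ ≤ k₁ + 1) :
    4 * ((k₁ + k₂) / 2) + 4 * (k₁.choose 2 + k₂.choose 2) ≤ (k₁ + k₂) ^ 2 := by
  have two_mul_choose : ∀ k : ℕ, 2 * k.choose 2 + k = k * k := fun k => by
    induction k with
    | zero => rfl
    | succ k ih => rw [Nat.choose_succ_succ, Nat.choose_one_right]; nlinarith
  have e₁ := two_mul_choose k₁
  have e₂ := two_mul_choose k₂
  rcases (by omega : k₂ = k₁ ∨ k₂ = k₁ + 1 ∨ k₁ = k₂ + 1) with h | h | h <;> subst h
  · rw [show (k₂ + k₂) / 2 = k₂ by omega]; nlinarith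
  · rw [show (k₁ + (k₁ + 1)) / 2 = k₁ by omega]; nlinarith
  · rw [show (k₂ + 1 + k₂) / 2 = k₂ by omega]; nlinarith

section Alpha1

variable {V : Type*} [Fintype V] {G : SimpleGraph V}

theorem bddAbove_card_triIndep (G : SimpleGraph V) :
    BddAbove {k | ∃ A : Finset (Sym2 V), TriIndep G A ∧ #A = k} := by
  classical
  exact ⟨Fintype.card (Sym2 V), by rintro _ ⟨A, -, rfl⟩; exact card_le_univ A⟩

theorem TriIndep.card_le_alpha1 {A : Finset (Sym2 V)} (hA : TriIndep G A) : #A ≤ alpha1 G :=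
  le_csSup (bddAbove_card_triIndep G) ⟨A, hA, rfl⟩

theorem exists_triIndep_card_eq_alpha1 (G : SimpleGraph V) :
    ∃ A : Finset (Sym2 V), TriIndep G A ∧ #A = alpha1 G := by
  refine Nat.sSup_mem (s := {k | ∃ A : Finset (Sym2 V), TriIndep G A ∧ #A = k})
    ⟨0, ∅, ?_, rfl⟩ (bddAbove_card_triIndep G)
  simp [TriIndep]

theorem alpha1_eq_zero_of_isEmpty [IsEmpty V] (G : SimpleGraph V) : alpha1 G = 0 := by
  obtain ⟨A, -, hA⟩ := exists_triIndep_card_eq_alpha1 G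
  rw [← hA, eq_empty_of_isEmpty A, card_empty]

end Alpha1

namespace TriIndep

variable {V : Type*} {G : SimpleGraph V} {A : Finset (Sym2 V)} {S : Finset V}

theorem not_adj (hA : TriIndep G A) {x y z : V} (hy : s(x, y) ∈ A) (hz : s(x, z) ∈ A) :
    ¬G.Adj y z := fun hyz =>
  hA.2 y x z (G.mem_edgeSet.mp (hA.1 hy)).symm (hA.1 hz) hyz ⟨Sym2.eq_swap ▸ hy, hz⟩

theorem eq_of_isClique (hA : TriIndep G A) (hS : G.IsClique (S : Set V)) {x y z : V}
    (hy : s(x, y) ∈ A) (hz : s(x, z) ∈ A) (hyS : y ∈ S) (hzS : z ∈ S) : y = z :=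
  by_contra fun hyz => hA.not_adj hy hz (hS hyS hzS hyz)

variable [DecidableEq V]

theorem induce_preimage (hA : TriIndep G A) (T : Finset V) :
    TriIndep (G.induce (T : Set V)) {e : Sym2 (T : Set V) | e.map Subtype.val ∈ A} := by
  refine ⟨fun e he => ?_, fun x y z hxy hyz hxz ⟨h₁, h₂⟩ => ?_⟩
  · induction e using Sym2.ind with
    | _ x y => exact hA.1 (by simpa using he)
  · exact hA.2 x y z hxy hyz hxz ⟨by simpa using h₁, by simpa using h₂⟩

theorem card_inter_sym2_le_alpha1_induce (hA : TriIndep G A) (T : Finset V) :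
    #(A ∩ T.sym2) ≤ alpha1 (G.induce (T : Set V)) :=
  (card_inter_sym2_le_card_preimage A T).trans (hA.induce_preimage T).card_le_alpha1

theorem two_mul_card_inter_sym2_le_of_isClique (hA : TriIndep G A)
    (hS : G.IsClique (S : Set V)) : 2 * #(A ∩ S.sym2) ≤ #S := by
  have := card_mul_le_card_mul (s := A ∩ S.sym2) (t := S) (fun e x => x ∈ e)
    (m := 2) (n := 1) ?_ ?_
  · omega
  · intro e he
    induction e using Sym2.ind with
    | _ x y =>
      obtain ⟨he, hS⟩ := mem_inter.mp he
      have hS := mem_sym2_iff.mp hS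
      have hxy : x ≠ y := G.ne_of_adj (hA.1 he)
      calc 2 = #{x, y} := (card_pair hxy).symm
        _ ≤ _ := card_le_card fun z hz => by
          rcases mem_insert.mp hz with rfl | hz
          · exact mem_filter.mpr ⟨hS _ (Sym2.mem_mk_left _ y), Sym2.mem_mk_left _ y⟩
          · rw [mem_singleton.mp hz]
            exact mem_filter.mpr ⟨hS _ (Sym2.mem_mk_right x _), Sym2.mem_mk_right x _⟩
  · intro x _
    refine card_le_one.mpr fun e₁ he₁ e₂ he₂ => ?_
    simp only [bipartiteBelow, mem_filter, mem_inter, mem_sym2_iff] at he₁ he₂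
    obtain ⟨y, rfl⟩ := Sym2.mem_iff_exists.mp he₁.2
    obtain ⟨z, rfl⟩ := Sym2.mem_iff_exists.mp he₂.2
    rw [hA.eq_of_isClique hS he₁.1.1 he₂.1.1 (he₁.1.2 y (Sym2.mem_mk_right x y))
      (he₂.1.2 z (Sym2.mem_mk_right x z))]

theorem card_sdiff_sym2_union_sym2_compl_le_of_isClique [Fintype V] (hA : TriIndep G A)
    (hS : G.IsClique (S : Set V)) : #(A \ (S.sym2 ∪ Sᶜ.sym2)) ≤ #Sᶜ := by
  refine card_le_card_of_forall_subsingleton (fun e y => y ∈ e) ?_ fun y hy => ?_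
  · intro e he
    obtain ⟨y, hye, hyS⟩ : ∃ y ∈ e, y ∉ S := by
      simpa [mem_sym2_iff] using fun h => (mem_sdiff.mp he).2 (mem_union_left _ h)
    exact ⟨y, mem_compl.mpr hyS, hye⟩
  · have other_mem : ∀ e ∈ A \ (S.sym2 ∪ Sᶜ.sym2), y ∈ e → ∃ x ∈ S, e = s(y, x) := by
      intro e he hye
      obtain ⟨x, rfl⟩ := Sym2.mem_iff_exists.mp hye
      refine ⟨x, ?_, rfl⟩
      by_contra hx
      exact (mem_sdiff.mp he).2 (mem_union_right _ <| mem_sym2_iff.mpr fun z hz => by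
        rcases Sym2.mem_iff.mp hz with rfl | rfl
        exacts [hy, mem_compl.mpr hx])
    rintro e₁ ⟨he₁, hy₁⟩ e₂ ⟨he₂, hy₂⟩
    obtain ⟨x, hx, rfl⟩ := other_mem e₁ he₁ hy₁
    obtain ⟨z, hz, rfl⟩ := other_mem e₂ he₂ hy₂
    rw [hA.eq_of_isClique hS (mem_sdiff.mp he₁).1 (mem_sdiff.mp he₂).1 hx hz]

end TriIndep

theorem alpha1_le_of_isClique {V : Type*} [Fintype V] [DecidableEq V] {G : SimpleGraph V}
    {S : Finset V} (hS : G.IsClique (S : Set V)) :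
    alpha1 G ≤ alpha1 (G.induce (Sᶜ : Finset V)) + #S / 2 + #Sᶜ := by
  obtain ⟨A, hA, hcard⟩ := exists_triIndep_card_eq_alpha1 G
  have hT := hA.card_inter_sym2_le_alpha1_induce Sᶜ
  have hin := hA.two_mul_card_inter_sym2_le_of_isClique hS
  have hcross := hA.card_sdiff_sym2_union_sym2_compl_le_of_isClique hS
  have := card_le_card_inter_add_card_inter_add_card_sdiff A S.sym2 Sᶜ.sym2
  omega

section TauB

variable {V : Type*} [Fintype V] {G : SimpleGraph V}

open scoped Classical in
noncomputable def monochromaticEdges (G : SimpleGraph V) (c : V → Fin 2) : Finset (Sym2 V) :=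
  {e ∈ G.edgeFinset | (e.map c).IsDiag}

theorem mem_monochromaticEdges {c : V → Fin 2} {e : Sym2 V} :
    e ∈ monochromaticEdges G c ↔ e ∈ G.edgeSet ∧ (e.map c).IsDiag := by
  simp [monochromaticEdges]

variable (G)

theorem colorable_deleteEdges_monochromaticEdges (c : V → Fin 2) :
    (G.deleteEdges (monochromaticEdges G c)).Colorable 2 :=
  ⟨SimpleGraph.Coloring.mk c fun h hxy =>
    (G.deleteEdges_adj.mp h).2 (mem_monochromaticEdges.mpr ⟨(G.deleteEdges_adj.mp h).1, hxy⟩)⟩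

theorem tauB_le_card_monochromaticEdges (c : V → Fin 2) : tauB G ≤ #(monochromaticEdges G c) :=
  Nat.sInf_le ⟨_, fun _ he => (mem_monochromaticEdges.mp he).1,
    colorable_deleteEdges_monochromaticEdges G c, rfl⟩

theorem exists_card_monochromaticEdges_le_tauB :
    ∃ c : V → Fin 2, #(monochromaticEdges G c) ≤ tauB G := by
  obtain ⟨X, -, ⟨C⟩, hX⟩ := Nat.sInf_mem (s := {k | ∃ X : Finset (Sym2 V),
      (X : Set (Sym2 V)) ⊆ G.edgeSet ∧ (G.deleteEdges (X : Set (Sym2 V))).Colorable 2 ∧ #X = k})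
    ⟨_, _, fun _ he => (mem_monochromaticEdges.mp he).1,
      colorable_deleteEdges_monochromaticEdges G fun _ => 0, rfl⟩
  refine ⟨C, (card_le_card fun e he => ?_).trans_eq hX⟩
  induction e using Sym2.ind with
  | _ x y =>
    obtain ⟨hxy, hc⟩ := mem_monochromaticEdges.mp he
    by_contra hX
    exact C.valid (G.deleteEdges_adj.mpr ⟨hxy, hX⟩) hc

theorem tauB_eq_zero_of_isEmpty [IsEmpty V] : tauB G = 0 :=
  Nat.eq_zero_of_le_zero <| (tauB_le_card_monochromaticEdges G fun _ => 0).trans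
    (card_eq_zero.mpr (eq_empty_of_isEmpty _)).le

variable [DecidableEq V]

theorem card_monochromaticEdges_inter_sym2_le_induce (c : V → Fin 2) (T : Finset V) :
    #(monochromaticEdges G c ∩ T.sym2) ≤
      #(monochromaticEdges (G.induce (T : Set V)) (c ∘ Subtype.val)) := by
  refine (card_inter_sym2_le_card_preimage _ T).trans (card_le_card fun e he => ?_)
  induction e using Sym2.ind with
  | _ x y => simpa [mem_monochromaticEdges] using he

theorem monochromaticEdges_inter_sym2_congr {c c' : V → Fin 2} {T : Finset V}
    (h : ∀ x ∈ T, c x = c' x) :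
    monochromaticEdges G c ∩ T.sym2 = monochromaticEdges G c' ∩ T.sym2 := by
  ext e
  induction e using Sym2.ind with
  | _ x y =>
    simp only [mem_inter, mem_monochromaticEdges, mem_sym2_iff, Sym2.mem_iff, forall_eq_or_imp,
      forall_eq, Sym2.map_mk, Sym2.mk_isDiag_iff]
    constructor <;> rintro ⟨⟨hxy, hc⟩, hx, hy⟩ <;> refine ⟨⟨hxy, ?_⟩, hx, hy⟩
    · rwa [← h x hx, ← h y hy]
    · rwa [h x hx, h y hy]

theorem card_monochromaticEdges_inter_sym2_union_le {c : V → Fin 2} {S₁ S₂ : Finset V}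
    (h₁ : ∀ x ∈ S₁, c x = 0) (h₂ : ∀ x ∈ S₂, c x = 1) :
    #(monochromaticEdges G c ∩ (S₁ ∪ S₂).sym2) ≤ (#S₁).choose 2 + (#S₂).choose 2 := by
  have hdiag : ∀ e ∈ monochromaticEdges G c, ¬e.IsDiag := fun e he =>
    G.not_isDiag_of_mem_edgeSet (mem_monochromaticEdges.mp he).1
  have hsplit : monochromaticEdges G c ∩ (S₁ ∪ S₂).sym2 ⊆
      monochromaticEdges G c ∩ S₁.sym2 ∪ monochromaticEdges G c ∩ S₂.sym2 := by
    intro e he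
    induction e using Sym2.ind with
    | _ x y =>
      simp only [mem_union, mem_inter, mem_sym2_iff, Sym2.mem_iff, forall_eq_or_imp,
        forall_eq] at he ⊢
      obtain ⟨hmono, hx, hy⟩ := he
      have hc : c x = c y := by simpa using (mem_monochromaticEdges.mp hmono).2
      rcases hx with hx | hx <;> rcases hy with hy | hy
      · exact Or.inl ⟨hmono, hx, hy⟩
      · simp [h₁ x hx, h₂ y hy] at hc
      · simp [h₂ x hx, h₁ y hy] at hc
      · exact Or.inr ⟨hmono, hx, hy⟩
  refine (card_le_card hsplit).trans ((card_union_le _ _).trans (add_le_add ?_ ?_)) <;>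
    exact card_le_choose_two_of_subset_sym2 inter_subset_right
      fun e he => hdiag e (mem_of_mem_inter_left he)

variable [DecidableRel G.Adj]

theorem card_monochromaticEdges_sdiff_le (c : V → Fin 2) (S : Finset V) :
    #(monochromaticEdges G c \ (S.sym2 ∪ Sᶜ.sym2)) ≤
      ∑ u ∈ S, #{x ∈ Sᶜ | G.Adj u x ∧ c x = c u} := by
  have hcross : ∀ u ∈ S, ∀ x ∉ S, G.Adj u x → c u = c x →
      s(u, x) ∈ S.biUnion fun u => {x ∈ Sᶜ | G.Adj u x ∧ c x = c u}.image (s(u, ·)) :=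
    fun u hu x hx hux hc => mem_biUnion.mpr
      ⟨u, hu, mem_image.mpr ⟨x, mem_filter.mpr ⟨mem_compl.mpr hx, hux, hc.symm⟩, rfl⟩⟩
  calc _ ≤ #(S.biUnion fun u => {x ∈ Sᶜ | G.Adj u x ∧ c x = c u}.image (s(u, ·))) :=
        card_le_card fun e he => ?_
    _ ≤ _ := card_biUnion_le.trans (sum_le_sum fun u _ => card_image_le)
  induction e using Sym2.ind with
  | _ x y =>
    obtain ⟨hmono, hS⟩ := mem_sdiff.mp he
    obtain ⟨hxy, hc⟩ := mem_monochromaticEdges.mp hmono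
    have hc : c x = c y := by simpa using hc
    simp only [mem_union, mem_sym2_iff, Sym2.mem_iff, forall_eq_or_imp, forall_eq,
      mem_compl, not_or] at hS
    by_cases hx : x ∈ S
    · exact hcross x hx y (fun hy => hS.1 ⟨hx, hy⟩) hxy hc
    · rw [Sym2.eq_swap]
      exact hcross y (by by_contra hy; exact hS.2 ⟨hx, hy⟩) x hx hxy.symm hc.symm

theorem card_monochromaticEdges_recolor_le (c : V → Fin 2) {S S₁ S₂ : Finset V}
    (hdisj : Disjoint S₁ S₂) (hunion : S₁ ∪ S₂ = S) :
    #(monochromaticEdges G fun x => if x ∈ S₁ then 0 else if x ∈ S₂ then 1 else c x) ≤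
      #(monochromaticEdges G c ∩ Sᶜ.sym2) + ((#S₁).choose 2 + (#S₂).choose 2) +
        (∑ u ∈ S₁, #{x ∈ Sᶜ | G.Adj u x ∧ c x = 0} +
          ∑ u ∈ S₂, #{x ∈ Sᶜ | G.Adj u x ∧ c x ≠ 0}) := by
  set c' : V → Fin 2 := fun x => if x ∈ S₁ then 0 else if x ∈ S₂ then 1 else c x
  have hc'₁ : ∀ x ∈ S₁, c' x = 0 := fun x hx => if_pos hx
  have hc'₂ : ∀ x ∈ S₂, c' x = 1 := fun x hx => by simp [c', hx, disjoint_right.mp hdisj hx]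
  have hc'c : ∀ x ∈ Sᶜ, c' x = c x := fun x hx => by
    rw [mem_compl, ← hunion, mem_union, not_or] at hx
    simp [c', hx.1, hx.2]
  have hcross : ∑ u ∈ S, #{x ∈ Sᶜ | G.Adj u x ∧ c' x = c' u} =
      ∑ u ∈ S₁, #{x ∈ Sᶜ | G.Adj u x ∧ c x = 0} + ∑ u ∈ S₂, #{x ∈ Sᶜ | G.Adj u x ∧ c x ≠ 0} := by
    calc ∑ u ∈ S, #{x ∈ Sᶜ | G.Adj u x ∧ c' x = c' u}
        = ∑ u ∈ S₁, #{x ∈ Sᶜ | G.Adj u x ∧ c' x = c' u} +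
            ∑ u ∈ S₂, #{x ∈ Sᶜ | G.Adj u x ∧ c' x = c' u} := by rw [← sum_union hdisj, hunion]
      _ = _ := ?_
    congr 1 <;> refine sum_congr rfl fun u hu => congrArg card (filter_congr fun x hx => ?_)
    · rw [hc'₁ u hu, hc'c x hx]
    · rw [hc'₂ u hu, hc'c x hx, (by decide : ∀ a : Fin 2, a = 1 ↔ a ≠ 0)]
  rw [← monochromaticEdges_inter_sym2_congr G hc'c, ← hcross, ← hunion]
  have := card_le_card_inter_add_card_inter_add_card_sdiff (monochromaticEdges G c')
    (S₁ ∪ S₂).sym2 (S₁ ∪ S₂)ᶜ.sym2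
  have := card_monochromaticEdges_inter_sym2_union_le G hc'₁ hc'₂
  have := card_monochromaticEdges_sdiff_le G c' (S₁ ∪ S₂)
  omega

theorem four_mul_tauB_add_le (S : Finset V) :
    4 * tauB G + 4 * (#S / 2) ≤
      4 * tauB (G.induce (Sᶜ : Finset V)) + #S ^ 2 + 2 * ∑ u ∈ S, #{x ∈ Sᶜ | G.Adj u x} := by
  obtain ⟨cT, hcT⟩ := exists_card_monochromaticEdges_le_tauB (G.induce (Sᶜ : Finset V))
  set c : V → Fin 2 := fun x => if h : x ∈ Sᶜ then cT ⟨x, h⟩ else 0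
  have hT : #(monochromaticEdges G c ∩ Sᶜ.sym2) ≤ tauB (G.induce (Sᶜ : Finset V)) := by
    have hc : c ∘ Subtype.val = cT := funext fun x => dif_pos x.2
    exact (card_monochromaticEdges_inter_sym2_le_induce G c Sᶜ).trans (hc ▸ hcT)
  obtain ⟨S₁, S₂, hdisj, hunion, h₁, h₂, hcost⟩ := exists_balanced_split
    (fun u => #{x ∈ Sᶜ | G.Adj u x ∧ c x = 0}) (fun u => #{x ∈ Sᶜ | G.Adj u x ∧ c x ≠ 0}) S
  have hsplit : ∀ u, #{x ∈ Sᶜ | G.Adj u x ∧ c x = 0} + #{x ∈ Sᶜ | G.Adj u x ∧ c x ≠ 0} =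
      #{x ∈ Sᶜ | G.Adj u x} := fun u => by
    rw [← filter_filter, ← filter_filter, card_filter_add_card_filter_not]
  simp only [hsplit] at hcost
  have hbal := Nat.four_mul_div_two_add_four_mul_choose_two_le h₁ h₂
  rw [← card_union_of_disjoint hdisj, hunion] at hbal
  have := tauB_le_card_monochromaticEdges G
    fun x => if x ∈ S₁ then 0 else if x ∈ S₂ then 1 else c x
  have := card_monochromaticEdges_recolor_le G c hdisj hunion
  omega

end TauB

section Clique

variable {V : Type*} [DecidableEq V] {G : SimpleGraph V} [DecidableRel G.Adj]

theorem exists_nonadj_of_card_filter_adj_ge {S : Finset V} {v : V}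
    (hS : G.IsClique (S : Set V)) (hv : ¬G.IsClique (insert v (S : Set V)))
    (hcard : #S - 1 ≤ #{u ∈ S | G.Adj v u}) :
    (∃ w ∈ S, ¬G.Adj v w ∧ ∀ u ∈ S, u ≠ w → G.Adj v u) ∧ #{u ∈ S | G.Adj v u} = #S - 1 := by
  have hssub : {u ∈ S | G.Adj v u} ⊂ S := (filter_subset _ S).ssubset_of_ne fun h =>
    hv (SimpleGraph.isClique_insert.mpr ⟨hS, fun u hu _ => (mem_filter.mp (h ▸ hu)).2⟩)
  have hlt := card_lt_card hssub
  obtain ⟨w, hw⟩ : ∃ w, S \ {u ∈ S | G.Adj v u} = {w} :=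
    card_eq_one.mp (by rw [card_sdiff_of_subset hssub.subset]; omega)
  have hw' := mem_sdiff.mp (hw ▸ mem_singleton_self w : w ∈ S \ {u ∈ S | G.Adj v u})
  refine ⟨⟨w, hw'.1, fun h => hw'.2 (mem_filter.mpr ⟨hw'.1, h⟩), fun u hu huw => ?_⟩, by omega⟩
  by_contra h
  exact huw (mem_singleton.mp (hw ▸ mem_sdiff.mpr ⟨hu, fun hu' => h (mem_filter.mp hu').2⟩))

variable [Fintype V]

theorem sum_card_filter_adj_compl_add_le {S : Finset V} {d : ℕ}
    (h : ∀ y ∉ S, #{u ∈ S | G.Adj y u} + d ≤ #S) :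
    ∑ u ∈ S, #{x ∈ Sᶜ | G.Adj u x} + #Sᶜ * d ≤ #Sᶜ * #S := by
  have hswap : ∑ u ∈ S, #{x ∈ Sᶜ | G.Adj u x} = ∑ y ∈ Sᶜ, #{u ∈ S | G.Adj y u} := by
    simpa only [bipartiteAbove, bipartiteBelow, G.adj_comm] using
      sum_card_bipartiteAbove_eq_sum_card_bipartiteBelow (s := S) (t := Sᶜ) G.Adj
  calc ∑ u ∈ S, #{x ∈ Sᶜ | G.Adj u x} + #Sᶜ * d = ∑ y ∈ Sᶜ, (#{u ∈ S | G.Adj y u} + d) := by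
        rw [hswap, sum_add_distrib, sum_const, smul_eq_mul]
    _ ≤ ∑ _y ∈ Sᶜ, #S := sum_le_sum fun y hy => h y (mem_compl.mp hy)
    _ = #Sᶜ * #S := by rw [sum_const, smul_eq_mul]

end Clique

open scoped Classical in
/-- If `G` is a minimal counterexample to the conjecture `α₁ + τ_B ≤ n²/4` and `S` is a
maximal clique in `G`, then there is a vertex `v ∉ S` such that `G[S ∪ {v}]` is an
induced copy of `K_{|S|+1}⁻`: `v` is nonadjacent to exactly one vertex of `S` and
adjacent to the remaining `|S| − 1` vertices of `S`. -/
theorem stmt10 {V : Type*} [Fintype V] (G : SimpleGraph V) (n : ℕ)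
    (hn : Fintype.card V = n)
    (hctx : (alpha1 G + tauB G : ℝ) > n ^ 2 / 4)
    (hmin : ∀ S : Finset V, S ≠ Finset.univ →
      (alpha1 (G.induce (S : Set V)) + tauB (G.induce (S : Set V)) : ℝ) ≤
        (S.card : ℝ) ^ 2 / 4)
    (S : Finset V) (hclique : G.IsClique (S : Set V))
    (hmax : ∀ v ∉ S, ¬G.IsClique (insert v (S : Set V))) :
    ∃ v ∉ S, (∃ w ∈ S, ¬G.Adj v w ∧ ∀ u ∈ S, u ≠ w → G.Adj v u) ∧
      (S.filter (fun u => G.Adj v u)).card = S.card - 1 := by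
  rw [gt_iff_lt, div_lt_iff₀ four_pos] at hctx
  norm_cast at hctx
  have : Nonempty V := by
    by_contra hV
    have := not_nonempty_iff.mp hV
    simp [alpha1_eq_zero_of_isEmpty, tauB_eq_zero_of_isEmpty] at hctx
  by_cases hex : ∃ v ∉ S, #S - 1 ≤ #{u ∈ S | G.Adj v u}
  · obtain ⟨v, hvS, hv⟩ := hex
    exact ⟨v, hvS, exists_nonadj_of_card_filter_adj_ge hclique (hmax v hvS) hv⟩
  push Not at hex
  -- For `S = ∅`, `hex` would give `_ < 0 - 1 = 0`.
  have hS : S ≠ ∅ := fun h => by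
    simpa [h] using hex (Classical.arbitrary V) (by simp [h])
  have hH := hmin Sᶜ (by simpa using hS)
  rw [le_div_iff₀ four_pos] at hH
  norm_cast at hH
  have hα := alpha1_le_of_isClique hclique
  have hτ := four_mul_tauB_add_le G S
  have hcut := sum_card_filter_adj_compl_add_le (G := G) (S := S) (d := 2)
    fun y hy => by have := hex y hy; omega
  have hn' : #S + #Sᶜ = n := hn ▸ card_add_card_compl S
  subst hn'
  nlinarith
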